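/- Let Y₁,…,Yₙ be i.i.d. N(μ, σ²) with a ≤ μ ≤ b known a priori (a < b), let Ȳ be the sample mean, and define the projected estimator μ̂ = a·1{Ȳ < a} + Ȳ·1{a ≤ Ȳ ≤ b} + b·1{Ȳ > b}. Then E[(μ̂ - μ)²] < E[(Ȳ - μ)²] for every μ ∈ [a,b], σ² > 0 and every finite n ≥ 1. -/
import Mathlib


open MeasureTheory ProbabilityTheory

lemma integrable_sq_gaussian (μ : ℝ) (v : NNReal) (hv : v ≠ 0) :
    Integrable (fun x : ℝ => (x - μ) ^ 2) (gaussianReal μ v) := by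
  have hv' : (0 : ℝ) < v := lt_of_le_of_ne v.coe_nonneg (by exact_mod_cast (Ne.symm hv))
  have hb0 : (0 : ℝ) < (2 * (v : ℝ))⁻¹ := by positivity
  have base : Integrable (fun x : ℝ => x ^ 2 * Real.exp (-(2 * (v : ℝ))⁻¹ * x ^ 2)) := by
    have h := integrable_rpow_mul_exp_neg_mul_sq hb0 (s := 2) (by norm_num)
    have : (fun x : ℝ => x ^ (2 : ℝ) * Real.exp (-(2 * (v : ℝ))⁻¹ * x ^ 2))
        = fun x : ℝ => x ^ 2 * Real.exp (-(2 * (v : ℝ))⁻¹ * x ^ 2) := by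
      funext x
      rw [show (2 : ℝ) = ((2 : ℕ) : ℝ) by norm_num, Real.rpow_natCast]
    rwa [this] at h
  have shifted : Integrable
      (fun x : ℝ => (x - μ) ^ 2 * Real.exp (-(2 * (v : ℝ))⁻¹ * (x - μ) ^ 2)) :=
    base.comp_sub_right μ
  have key : Integrable (fun x : ℝ => (x - μ) ^ 2 * gaussianPDFReal μ v x) := by
    have heq : (fun x : ℝ => (x - μ) ^ 2 * gaussianPDFReal μ v x)
        = fun x : ℝ => (Real.sqrt (2 * Real.pi * v))⁻¹ *
            ((x - μ) ^ 2 * Real.exp (-(2 * (v : ℝ))⁻¹ * (x - μ) ^ 2)) := by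
      funext x
      unfold gaussianPDFReal
      rw [show -(x - μ) ^ 2 / (2 * (v : ℝ)) = -(2 * (v : ℝ))⁻¹ * (x - μ) ^ 2 by
        rw [div_eq_mul_inv]; ring]
      ring
    rw [heq]
    exact shifted.const_mul _
  rw [gaussianReal_of_var_ne_zero _ hv,
    integrable_withDensity_iff (measurable_gaussianPDF _ _)
      (Filter.Eventually.of_forall fun x => ENNReal.ofReal_lt_top)]
  refine key.congr (Filter.Eventually.of_forall fun x => ?_)
  simp [gaussianPDF, ENNReal.toReal_ofReal (gaussianPDFReal_nonneg μ v x)]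

/-- MSE dominance of the projected estimator: if Ȳ ~ N(μ, σ²/n) (the sampling
distribution of the mean of n i.i.d. N(μ,σ²) observations) and a ≤ μ ≤ b with
a < b, then the estimator μ̂ = min(max(Ȳ,a),b) has strictly smaller mean squared
error than Ȳ. -/
theorem projected_mean_dominates (a b μ : ℝ) (hab : a < b)
    (ha : a ≤ μ) (hb : μ ≤ b) (σ2 : NNReal) (hσ : σ2 ≠ 0)
    (n : ℕ) (hn : 1 ≤ n) :
    ∫ x, (min (max x a) b - μ) ^ 2 ∂(gaussianReal μ (σ2 / n))
      < ∫ x, (x - μ) ^ 2 ∂(gaussianReal μ (σ2 / n)) := by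
  set v : NNReal := σ2 / n with hv_def
  have hn0 : (n : NNReal) ≠ 0 := Nat.cast_ne_zero.mpr (by omega)
  have hv : v ≠ 0 := div_ne_zero hσ hn0
  set ν := gaussianReal μ v with hν_def
  set f : ℝ → ℝ := fun x => (min (max x a) b - μ) ^ 2 with hf_def
  set g : ℝ → ℝ := fun x => (x - μ) ^ 2 with hg_def
  -- pointwise inequality f ≤ g
  have hfg : ∀ x, f x ≤ g x := by
    intro x
    simp only [hf_def, hg_def]
    rcases le_total x a with h | h
    · rw [max_eq_right h, min_eq_left hab.le]
      nlinarith
    · rw [max_eq_left h]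
      rcases le_total x b with h' | h'
      · rw [min_eq_left h']
      · rw [min_eq_right h']
        nlinarith
  -- integrability
  have hg_int : Integrable g ν := integrable_sq_gaussian μ v hv
  have hf_cont : Continuous f := by
    simp only [hf_def]
    fun_prop
  have hf_int : Integrable f ν := by
    refine Integrable.mono' (integrable_const ((|a - μ| + |b - μ|) ^ 2))
      hf_cont.aestronglyMeasurable (Filter.Eventually.of_forall fun x => ?_)
    have h1 : a ≤ min (max x a) b := le_min (le_max_right x a) hab.le
    have h2 : min (max x a) b ≤ b := min_le_right _ _
    have := abs_nonneg (a - μ)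
    have := abs_nonneg (b - μ)
    have := abs_le.mp (le_refl |a - μ|)
    rw [Real.norm_eq_abs, hf_def]
    have hub : min (max x a) b - μ ≤ |a - μ| + |b - μ| := by
      have : b - μ ≤ |b - μ| := le_abs_self _
      linarith [abs_nonneg (a - μ)]
    have hlb : -(|a - μ| + |b - μ|) ≤ min (max x a) b - μ := by
      have : -(|a - μ|) ≤ a - μ := neg_abs_le _
      linarith [abs_nonneg (b - μ)]
    calc |(min (max x a) b - μ) ^ 2| = (min (max x a) b - μ) ^ 2 := abs_of_nonneg (sq_nonneg _)
      _ ≤ (|a - μ| + |b - μ|) ^ 2 := sq_le_sq' hlb hub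
  -- strict positivity of ∫ (g - f)
  have hdiff_nonneg : 0 ≤ fun x => g x - f x := fun x => sub_nonneg.mpr (hfg x)
  have hdiff_int : Integrable (fun x => g x - f x) ν := hg_int.sub hf_int
  have hsupp : Set.Ioi b ⊆ Function.support fun x => g x - f x := by
    intro x hx
    have hx' : b < x := hx
    have : f x = (b - μ) ^ 2 := by
      simp only [hf_def]
      rw [max_eq_left (le_trans hab.le hx'.le), min_eq_right hx'.le]
    simp only [Function.mem_support, this, hg_def]
    have : (b - μ) ^ 2 < (x - μ) ^ 2 := by nlinarith
    intro h
    linarith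
  have hν_pos : 0 < ν (Function.support fun x => g x - f x) := by
    refine lt_of_lt_of_le ?_ (measure_mono hsupp)
    rw [pos_iff_ne_zero]
    intro h0
    have hvol := gaussianReal_absolutelyContinuous' μ hv h0
    rw [Real.volume_Ioi] at hvol
    exact ENNReal.top_ne_zero hvol
  have hpos : 0 < ∫ x, (g x - f x) ∂ν :=
    (integral_pos_iff_support_of_nonneg hdiff_nonneg hdiff_int).mpr hν_pos
  rw [integral_sub hg_int hf_int] at hpos
  linarith
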